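/- On the space of 3×3 Hermitian octonion matrices with the Jordan product X∘Y = (XY+YX)/2, the bilinear form (X,Y) = tr(X∘Y) is symmetric and positive definite. -/

import Mathlib

/-! The Jordan product is commutative, which gives symmetry. For Hermitian `X` the diagonal
entries of `X ∘ X = X X` have real parts `∑ₖ re (x_ik x̄_ik)`, and in the Cayley–Dickson
construction `re (p p̄)` is the sum of the squared norms of the two quaternion halves of `p`,
so `tr (X ∘ X)` is the sum of squared norms of all entries of `X`. -/

/-- The octonions, via the Cayley–Dickson construction over the quaternions. -/
def Octonion : Type := Quaternion ℝ × Quaternion ℝ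

noncomputable instance : AddCommGroup Octonion := inferInstanceAs (AddCommGroup (Quaternion ℝ × Quaternion ℝ))
noncomputable instance : Module ℝ Octonion := inferInstanceAs (Module ℝ (Quaternion ℝ × Quaternion ℝ))

/-- Cayley–Dickson multiplication on the octonions. -/
noncomputable instance : Mul Octonion :=
  ⟨fun p q => (p.1 * q.1 - star q.2 * p.2, q.2 * p.1 + p.2 * star q.1)⟩

/-- Octonion conjugation. -/
instance : Star Octonion := ⟨fun p => (star p.1, -p.2)⟩

/-- The real part of an octonion. -/
def Octonion.re (p : Octonion) : ℝ := p.1.re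

/-- Matrix multiplication for `3 × 3` octonion matrices. -/
noncomputable def omul (X Y : Matrix (Fin 3) (Fin 3) Octonion) : Matrix (Fin 3) (Fin 3) Octonion :=
  fun i j => ∑ k : Fin 3, X i k * Y k j

/-- The Jordan product `X ∘ Y = ½(XY + YX)`. -/
noncomputable def jord (X Y : Matrix (Fin 3) (Fin 3) Octonion) : Matrix (Fin 3) (Fin 3) Octonion :=
  (1 / 2 : ℝ) • (omul X Y + omul Y X)

/-- The (real) trace, the sum of the real diagonal entries. -/
def trR (X : Matrix (Fin 3) (Fin 3) Octonion) : ℝ := ∑ i : Fin 3, (X i i).re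

/-- A `3 × 3` octonion matrix is Hermitian if its conjugate transpose is itself. -/
def OHermitian (X : Matrix (Fin 3) (Fin 3) Octonion) : Prop :=
  ∀ i j, X i j = star (X j i)

namespace Octonion

lemma re_sum {ι : Type*} (s : Finset ι) (f : ι → Octonion) :
    (∑ i ∈ s, f i).re = ∑ i ∈ s, (f i).re :=
  map_sum ((QuaternionAlgebra.reₗ (-1 : ℝ) 0 (-1)).toAddMonoidHom.comp
    (AddMonoidHom.fst (Quaternion ℝ) (Quaternion ℝ))) f s

lemma re_mul_star (p : Octonion) :
    (p * star p).re = Quaternion.normSq p.1 + Quaternion.normSq p.2 := by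
  show (p.1 * star p.1 - star (-p.2) * p.2).re = _
  simp [Quaternion.self_mul_star, Quaternion.star_mul_self, sub_eq_add_neg]

lemma re_mul_star_nonneg (p : Octonion) : 0 ≤ (p * star p).re := by
  rw [re_mul_star]
  exact add_nonneg Quaternion.normSq_nonneg Quaternion.normSq_nonneg

lemma re_mul_star_eq_zero {p : Octonion} : (p * star p).re = 0 ↔ p = 0 := by
  rw [re_mul_star, add_eq_zero_iff_of_nonneg Quaternion.normSq_nonneg Quaternion.normSq_nonneg,
    Quaternion.normSq_eq_zero, Quaternion.normSq_eq_zero]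
  exact ⟨fun h => Prod.ext h.1 h.2, fun h => h ▸ ⟨rfl, rfl⟩⟩

lemma re_mul_star_pos {p : Octonion} (hp : p ≠ 0) : 0 < (p * star p).re :=
  (re_mul_star_nonneg p).lt_of_ne' (re_mul_star_eq_zero.not.2 hp)

end Octonion

lemma jord_comm (X Y : Matrix (Fin 3) (Fin 3) Octonion) : jord X Y = jord Y X := by
  rw [jord, jord, add_comm]

lemma jord_self (X : Matrix (Fin 3) (Fin 3) Octonion) : jord X X = omul X X := by
  rw [jord, ← two_smul ℝ, smul_smul]
  norm_num

lemma trR_omul_self_of_OHermitian {X : Matrix (Fin 3) (Fin 3) Octonion} (hX : OHermitian X) :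
    trR (omul X X) = ∑ i, ∑ k, (X i k * star (X i k)).re := by
  simp only [trR, omul, Octonion.re_sum]
  congr! 3 with i - k -
  rw [← hX]

lemma trR_jord_self_pos {X : Matrix (Fin 3) (Fin 3) Octonion} (hX : OHermitian X) (hX0 : X ≠ 0) :
    0 < trR (jord X X) := by
  obtain ⟨i, k, hik⟩ : ∃ i k, X i k ≠ 0 := by
    by_contra! h
    exact hX0 (Matrix.ext h)
  rw [jord_self, trR_omul_self_of_OHermitian hX]
  exact Finset.sum_pos' (fun i _ => Finset.sum_nonneg fun k _ => Octonion.re_mul_star_nonneg _)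
    ⟨i, Finset.mem_univ _, Finset.sum_pos' (fun k _ => Octonion.re_mul_star_nonneg _)
      ⟨k, Finset.mem_univ _, Octonion.re_mul_star_pos hik⟩⟩

/-- On `3 × 3` Hermitian octonion matrices, the bilinear form
`(X,Y) = tr(X ∘ Y)` is symmetric and positive definite. -/
theorem stmt11 :
    (∀ X Y : Matrix (Fin 3) (Fin 3) Octonion, OHermitian X → OHermitian Y →
      trR (jord X Y) = trR (jord Y X)) ∧
    (∀ X : Matrix (Fin 3) (Fin 3) Octonion, OHermitian X → X ≠ 0 →
      0 < trR (jord X X)) :=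
  ⟨fun X Y _ _ => by rw [jord_comm], fun _ hX hX0 => trR_jord_self_pos hX hX0⟩
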